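/- arXiv:1808.03022 — 2 statements merged into one kernel-verified Lean document; each statement's English description precedes it below -/
import Mathlib

section
/- Let G₁ and G₂ be connected finite simple graphs on vertex sets {1,…,k₁} and {1,…,k₂} with Laplacian matrices L₁ and L₂, let s ∈ {1,…,k₂}, and suppose there is a nonempty set P ⊆ {1,…,k₁} such that every eigenvector of L₁ has nonzero entries at all positions in P, and every eigenvector of L₂ has a nonzero s-th entry. Then every eigenvector of the composite matrix L = I_{k₁} ⊗ L₂ + L₁ ⊗ (e_s e_sᵀ) has a nonzero entry at position (i, s) for every i ∈ P. -/
/-!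
Write `wᵢ = w (i, ·)` and `u = w (·, s)`. The eigen-equation `L w = μ w` says
`(L₂ - μ) wᵢ = -(L₁ u)ᵢ eₛ` for every `i`. If `u = 0`, a nonzero slice `wᵢ` would be an
eigenvector of `L₂` vanishing at `s`, so `u ≠ 0`. If `μ` is an eigenvalue of `L₂`, with
eigenvector `z`, then `z s ≠ 0` and, `L₂` being symmetric, pairing with `z` gives
`(L₁ u)ᵢ z s = 0`, so `L₁ u = 0`. Otherwise `wᵢ = -(L₁ u)ᵢ (L₂ - μ)⁻¹ eₛ`, and the `s`-th entry
gives `u = -y L₁ u` with `y = (L₂ - μ)⁻¹ s s ≠ 0`. Either way `u` is an eigenvector of `L₁`.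
-/

/-- The composite matrix `L = I_{k₁} ⊗ L₂ + L₁ ⊗ (e_s e_sᵀ)`, indexed by pairs. -/
def composite {k₁ k₂ : ℕ} (L₁ : Matrix (Fin k₁) (Fin k₁) ℝ) (L₂ : Matrix (Fin k₂) (Fin k₂) ℝ)
    (s : Fin k₂) : Matrix (Fin k₁ × Fin k₂) (Fin k₁ × Fin k₂) ℝ :=
  Matrix.of fun p q =>
    (if p.1 = q.1 then L₂ p.2 q.2 else 0) +
    L₁ p.1 q.1 * ((if p.2 = s then (1 : ℝ) else 0) * (if q.2 = s then (1 : ℝ) else 0))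

open Matrix

theorem Matrix.IsSymm.eq_zero_of_mulVec_eq_single {n R : Type*} [Fintype n] [DecidableEq n]
    [CommRing R] [NoZeroDivisors R] {M : Matrix n n R} (hM : M.IsSymm) {z : n → R}
    (hz : M *ᵥ z = 0) {s : n} (hzs : z s ≠ 0) {x : n → R} {t : R}
    (hx : M *ᵥ x = Pi.single s t) : t = 0 := by
  have : z ⬝ᵥ M *ᵥ x = (M *ᵥ z) ⬝ᵥ x := by
    rw [dotProduct_mulVec, ← mulVec_transpose, hM.eq]
  rw [hx, hz, dotProduct_single, zero_dotProduct] at this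
  exact (mul_eq_zero.mp this).resolve_left hzs

theorem Matrix.sub_smul_one_mulVec_eq_zero_iff {n R : Type*} [Fintype n] [DecidableEq n]
    [CommRing R] (M : Matrix n n R) (μ : R) (v : n → R) :
    (M - μ • 1) *ᵥ v = 0 ↔ M *ᵥ v = μ • v := by
  rw [sub_mulVec, smul_mulVec, one_mulVec, sub_eq_zero]

section Composite

variable {k₁ k₂ : ℕ} (L₁ : Matrix (Fin k₁) (Fin k₁) ℝ) (L₂ : Matrix (Fin k₂) (Fin k₂) ℝ)
  (s : Fin k₂)

theorem composite_mulVec_slice (w : Fin k₁ × Fin k₂ → ℝ) (i : Fin k₁) :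
    (fun a => (composite L₁ L₂ s *ᵥ w) (i, a)) =
      L₂ *ᵥ (fun b => w (i, b)) + Pi.single s ((L₁ *ᵥ fun j => w (j, s)) i) := by
  ext a
  simp only [mulVec, dotProduct, composite, of_apply, Fintype.sum_prod_type, Pi.add_apply,
    Pi.single_apply, add_mul, Finset.sum_add_distrib, ite_mul, zero_mul, mul_ite,
    mul_zero, mul_one]
  rw [Finset.sum_comm]
  simp [Finset.sum_ite_eq, Finset.sum_ite_eq']

theorem sub_smul_one_mulVec_slice_of_composite_eigen {w : Fin k₁ × Fin k₂ → ℝ}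
    {μ : ℝ}
    (hw : composite L₁ L₂ s *ᵥ w = μ • w) (i : Fin k₁) :
    (L₂ - μ • 1) *ᵥ (fun b => w (i, b)) = Pi.single s (-(L₁ *ᵥ fun j => w (j, s)) i) := by
  have h := composite_mulVec_slice L₁ L₂ s w i
  rw [hw] at h
  ext a
  have ha := congrFun h a
  simp only [Pi.smul_apply, smul_eq_mul, Pi.add_apply] at ha
  simp only [sub_mulVec, smul_mulVec, one_mulVec, Pi.single_neg, Pi.sub_apply, Pi.smul_apply,
    smul_eq_mul, Pi.neg_apply]
  linarith

variable {L₁ L₂ s} {w : Fin k₁ × Fin k₂ → ℝ} {μ : ℝ}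

theorem composite_column_ne_zero
    (h₂ : ∀ v : Fin k₂ → ℝ, v ≠ 0 → (∃ μ : ℝ, L₂ *ᵥ v = μ • v) → v s ≠ 0)
    (hw : composite L₁ L₂ s *ᵥ w = μ • w) (hw0 : w ≠ 0) : (fun j => w (j, s)) ≠ 0 := by
  intro hu
  apply hw0
  ext ⟨i, a⟩
  have hslice := sub_smul_one_mulVec_slice_of_composite_eigen L₁ L₂ s hw i
  rw [hu, mulVec_zero, Pi.zero_apply, neg_zero, Pi.single_zero,
    sub_smul_one_mulVec_eq_zero_iff] at hslice
  by_contra hne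
  exact h₂ _ (fun h => hne (congrFun h a)) ⟨μ, hslice⟩ (congrFun hu i)

theorem composite_column_mulVec_eq_zero_of_det_eq_zero (hL₂ : L₂.IsSymm)
    (h₂ : ∀ v : Fin k₂ → ℝ, v ≠ 0 → (∃ μ : ℝ, L₂ *ᵥ v = μ • v) → v s ≠ 0)
    (hw : composite L₁ L₂ s *ᵥ w = μ • w) (hdet : (L₂ - μ • 1).det = 0) :
    L₁ *ᵥ (fun j => w (j, s)) = 0 := by
  obtain ⟨z, hz0, hz⟩ := exists_mulVec_eq_zero_iff.mpr hdet
  have hzs : z s ≠ 0 := h₂ z hz0 ⟨μ, (sub_smul_one_mulVec_eq_zero_iff _ _ _).mp hz⟩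
  ext i
  exact neg_eq_zero.mp <| (hL₂.sub (isSymm_one.smul μ)).eq_zero_of_mulVec_eq_single hz hzs
    (sub_smul_one_mulVec_slice_of_composite_eigen L₁ L₂ s hw i)

theorem composite_column_eq_of_det_ne_zero (hw : composite L₁ L₂ s *ᵥ w = μ • w)
    (hdet : (L₂ - μ • 1).det ≠ 0) (i : Fin k₁) :
    w (i, s) = (L₂ - μ • 1)⁻¹ s s * -(L₁ *ᵥ fun j => w (j, s)) i := by
  have h := congrArg ((L₂ - μ • 1)⁻¹ *ᵥ ·)
    (sub_smul_one_mulVec_slice_of_composite_eigen L₁ L₂ s hw i)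
  simp only [mulVec_mulVec, nonsing_inv_mul _ (isUnit_iff_ne_zero.mpr hdet), one_mulVec] at h
  simpa [mulVec_single] using congrFun h s

theorem composite_column_isEigenvector (hL₂ : L₂.IsSymm)
    (h₂ : ∀ v : Fin k₂ → ℝ, v ≠ 0 → (∃ μ : ℝ, L₂ *ᵥ v = μ • v) → v s ≠ 0)
    (hw : composite L₁ L₂ s *ᵥ w = μ • w) (hw0 : w ≠ 0) :
    (fun j => w (j, s)) ≠ 0 ∧ ∃ ν : ℝ, L₁ *ᵥ (fun j => w (j, s)) = ν • fun j => w (j, s) := by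
  have hu0 := composite_column_ne_zero h₂ hw hw0
  refine ⟨hu0, ?_⟩
  by_cases hdet : (L₂ - μ • 1).det = 0
  · exact ⟨0, by rw [composite_column_mulVec_eq_zero_of_det_eq_zero hL₂ h₂ hw hdet, zero_smul]⟩
  have hcol := composite_column_eq_of_det_ne_zero hw hdet
  set y := (L₂ - μ • 1)⁻¹ s s
  have hy : y ≠ 0 := fun hy => hu0 (funext fun i => by simp [hcol i, hy])
  refine ⟨-y⁻¹, funext fun i => ?_⟩
  rw [Pi.smul_apply, hcol i, smul_eq_mul]
  field_simp

end Composite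

theorem stmt_4_general (k₁ k₂ : ℕ)
    (G₁ : SimpleGraph (Fin k₁)) [DecidableRel G₁.Adj]
    (G₂ : SimpleGraph (Fin k₂)) [DecidableRel G₂.Adj]
    (s : Fin k₂) (P : Set (Fin k₁))
    (h₁ : ∀ v : Fin k₁ → ℝ, v ≠ 0 → (∃ μ : ℝ, (G₁.lapMatrix ℝ).mulVec v = μ • v) →
      ∀ i ∈ P, v i ≠ 0)
    (h₂ : ∀ v : Fin k₂ → ℝ, v ≠ 0 → (∃ μ : ℝ, (G₂.lapMatrix ℝ).mulVec v = μ • v) → v s ≠ 0) :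
    ∀ w : Fin k₁ × Fin k₂ → ℝ, w ≠ 0 →
      (∃ μ : ℝ, (composite (G₁.lapMatrix ℝ) (G₂.lapMatrix ℝ) s).mulVec w = μ • w) →
      ∀ i ∈ P, w (i, s) ≠ 0 := by
  rintro w hw0 ⟨μ, hw⟩
  obtain ⟨hu0, hu⟩ := composite_column_isEigenvector (G₂.isSymm_lapMatrix ℝ) h₂ hw hw0
  exact h₁ _ hu0 hu

theorem stmt_4 (k₁ k₂ : ℕ)
    (G₁ : SimpleGraph (Fin k₁)) [DecidableRel G₁.Adj] (hG₁ : G₁.Connected)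
    (G₂ : SimpleGraph (Fin k₂)) [DecidableRel G₂.Adj] (hG₂ : G₂.Connected)
    (s : Fin k₂) (P : Set (Fin k₁)) (hP : P.Nonempty)
    (h₁ : ∀ v : Fin k₁ → ℝ, v ≠ 0 → (∃ μ : ℝ, (G₁.lapMatrix ℝ).mulVec v = μ • v) →
      ∀ i ∈ P, v i ≠ 0)
    (h₂ : ∀ v : Fin k₂ → ℝ, v ≠ 0 → (∃ μ : ℝ, (G₂.lapMatrix ℝ).mulVec v = μ • v) → v s ≠ 0) :
    ∀ w : Fin k₁ × Fin k₂ → ℝ, w ≠ 0 →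
      (∃ μ : ℝ, (composite (G₁.lapMatrix ℝ) (G₂.lapMatrix ℝ) s).mulVec w = μ • w) →
      ∀ i ∈ P, w (i, s) ≠ 0 :=
  stmt_4_general k₁ k₂ G₁ G₂ s P h₁ h₂
end

section
/- Let L₁ be a k₁×k₁ real symmetric matrix, L₂ a k₂×k₂ real symmetric matrix (k₂ ≥ 2), s ∈ {1,…,k₂}, and let L = I_{k₁} ⊗ L₂ + L₁ ⊗ (e_s e_sᵀ) be the composite matrix. Let (λ, v) be an eigenpair of L and suppose the (k₂−1)×(k₂−1) matrix M obtained from L₂ − λI by deleting its s-th row and s-th column is invertible. Define v̄ ∈ ℝ^{k₁} by v̄_i = v[(i,s)], and let l ∈ ℝ^{k₂−1} be the s-th column of L₂ with its s-th entry removed. Then v̄ ≠ 0 and L₁ v̄ = μ v̄, where μ = λ − L₂[s,s] + lᵀ M^{−1} l; in particular, v̄ is an eigenvector of L₁. -/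
open Matrix

section SchurComplement

variable {R κ : Type*} [CommRing R] [Fintype κ] [DecidableEq κ]

abbrev Matrix.deleteRowCol (B : Matrix κ κ R) (s : κ) : Matrix {b // b ≠ s} {b // b ≠ s} R :=
  B.submatrix Subtype.val Subtype.val

variable (B : Matrix κ κ R) (s : κ)

lemma Matrix.mulVec_apply_eq_add_dotProduct_subtype_ne (x : κ → R) (i : κ) :
    (B *ᵥ x) i = B i s * x s + (fun b : {b // b ≠ s} => B i b.1) ⬝ᵥ fun b => x b.1 :=
  Fintype.sum_eq_add_sum_subtype_ne _ s

variable {B s} {x : κ → R} {c : R}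

lemma Matrix.restrict_eq_neg_smul_inv_mulVec_of_mulVec_eq_single
    (hB : IsUnit (B.deleteRowCol s)) (h : B *ᵥ x = Pi.single s c) :
    (fun b : {b // b ≠ s} => x b.1) = -x s • (B.deleteRowCol s)⁻¹ *ᵥ fun b => B b.1 s := by
  have hrestrict : B.deleteRowCol s *ᵥ (fun b => x b.1) = -x s • fun b => B b.1 s := by
    funext b
    have hb := congrFun h b
    rw [mulVec_apply_eq_add_dotProduct_subtype_ne B s, Pi.single_eq_of_ne b.2] at hb
    simp only [mulVec, dotProduct, submatrix_apply, Pi.smul_apply, smul_eq_mul] at hb ⊢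
    linear_combination hb
  rw [← mulVec_smul, ← hrestrict, mulVec_mulVec,
    nonsing_inv_mul _ ((isUnit_iff_isUnit_det _).mp hB), one_mulVec]

lemma Matrix.eq_schur_mul_of_mulVec_eq_single (hB : IsUnit (B.deleteRowCol s))
    (h : B *ᵥ x = Pi.single s c) :
    c = (B s s - (fun b : {b // b ≠ s} => B s b.1) ⬝ᵥ
      ((B.deleteRowCol s)⁻¹ *ᵥ fun b => B b.1 s)) * x s := by
  have hs := congrFun h s
  rw [mulVec_apply_eq_add_dotProduct_subtype_ne B s, Pi.single_eq_same,
    restrict_eq_neg_smul_inv_mulVec_of_mulVec_eq_single hB h, dotProduct_smul, smul_eq_mul] at hs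
  rw [← hs]
  ring

end SchurComplement

section Composite

variable {k₁ k₂ : ℕ} {L₁ : Matrix (Fin k₁) (Fin k₁) ℝ} {L₂ : Matrix (Fin k₂) (Fin k₂) ℝ}
  {s : Fin k₂}

lemma composite_mulVec_apply (v : Fin k₁ × Fin k₂ → ℝ) (i : Fin k₁) (a : Fin k₂) :
    (composite L₁ L₂ s *ᵥ v) (i, a) =
      (L₂ *ᵥ fun b => v (i, b)) a +
        (Pi.single s ((L₁ *ᵥ fun j => v (j, s)) i) : Fin k₂ → ℝ) a := by
  by_cases ha : a = s
  · subst ha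
    simp [composite, mulVec, dotProduct, Fintype.sum_prod_type, add_mul, Finset.sum_add_distrib]
  · simp [composite, mulVec, dotProduct, Fintype.sum_prod_type, ha]

lemma sub_smul_one_mulVec_eq_single_of_composite_mulVec_eq_smul {lam : ℝ}
    {v : Fin k₁ × Fin k₂ → ℝ} (hev : composite L₁ L₂ s *ᵥ v = lam • v) (i : Fin k₁) :
    (L₂ - lam • 1) *ᵥ (fun b => v (i, b)) = Pi.single s (-(L₁ *ᵥ fun j => v (j, s)) i) := by
  funext a
  have h := congrFun hev (i, a)
  rw [composite_mulVec_apply] at h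
  rw [sub_mulVec, smul_mulVec, one_mulVec, Pi.sub_apply, Pi.single_neg, Pi.neg_apply]
  simp only [Pi.smul_apply, smul_eq_mul] at h ⊢
  linear_combination h

end Composite

theorem stmt_5_general (k₁ k₂ : ℕ)
    (L₁ : Matrix (Fin k₁) (Fin k₁) ℝ)
    (L₂ : Matrix (Fin k₂) (Fin k₂) ℝ) (hL₂ : L₂.IsSymm)
    (s : Fin k₂) (lam : ℝ)
    (v : Fin k₁ × Fin k₂ → ℝ) (hv : v ≠ 0)
    (hev : (composite L₁ L₂ s).mulVec v = lam • v)
    (M : Matrix {a : Fin k₂ // a ≠ s} {a : Fin k₂ // a ≠ s} ℝ)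
    (hM : M = Matrix.of fun a b : {a : Fin k₂ // a ≠ s} =>
      (L₂ - lam • (1 : Matrix (Fin k₂) (Fin k₂) ℝ)) a.val b.val)
    (hMunit : IsUnit M)
    (vbar : Fin k₁ → ℝ) (hvbar : vbar = fun i => v (i, s))
    (l : {a : Fin k₂ // a ≠ s} → ℝ) (hl : l = fun a => L₂ a.val s) :
    vbar ≠ 0 ∧ L₁.mulVec vbar = (lam - L₂ s s + dotProduct l (M⁻¹.mulVec l)) • vbar := by
  subst hvbar hl
  replace hM : M = (L₂ - lam • 1).deleteRowCol s := hM
  subst hM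
  have hblock := sub_smul_one_mulVec_eq_single_of_composite_mulVec_eq_smul hev
  constructor
  · intro hzero
    refine hv (funext fun ⟨i, a⟩ => ?_)
    have hs : v (i, s) = 0 := congrFun hzero i
    by_cases ha : a = s
    · rwa [ha]
    · have hrest := restrict_eq_neg_smul_inv_mulVec_of_mulVec_eq_single hMunit (hblock i)
      simpa [hs] using congrFun hrest ⟨a, ha⟩
  · have hrow : (fun b : {b // b ≠ s} => (L₂ - lam • 1) s b) = fun b => L₂ b.1 s := by
      funext b
      simp [one_apply_ne (Ne.symm b.2), hL₂.apply]
    have hcol : (fun b : {b // b ≠ s} => (L₂ - lam • 1) b s) = fun b => L₂ b.1 s := by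
      funext b
      simp [one_apply_ne b.2]
    funext i
    have h := eq_schur_mul_of_mulVec_eq_single hMunit (hblock i)
    rw [hrow, hcol] at h
    simp only [Matrix.sub_apply, Matrix.smul_apply, one_apply_eq, smul_eq_mul, mul_one] at h
    simp only [Pi.smul_apply, smul_eq_mul]
    linear_combination -h

theorem stmt_5 (k₁ k₂ : ℕ) (hk₂ : 2 ≤ k₂)
    (L₁ : Matrix (Fin k₁) (Fin k₁) ℝ) (hL₁ : L₁.IsSymm)
    (L₂ : Matrix (Fin k₂) (Fin k₂) ℝ) (hL₂ : L₂.IsSymm)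
    (s : Fin k₂) (lam : ℝ)
    (v : Fin k₁ × Fin k₂ → ℝ) (hv : v ≠ 0)
    (hev : (composite L₁ L₂ s).mulVec v = lam • v)
    (M : Matrix {a : Fin k₂ // a ≠ s} {a : Fin k₂ // a ≠ s} ℝ)
    (hM : M = Matrix.of fun a b : {a : Fin k₂ // a ≠ s} =>
      (L₂ - lam • (1 : Matrix (Fin k₂) (Fin k₂) ℝ)) a.val b.val)
    (hMunit : IsUnit M)
    (vbar : Fin k₁ → ℝ) (hvbar : vbar = fun i => v (i, s))
    (l : {a : Fin k₂ // a ≠ s} → ℝ) (hl : l = fun a => L₂ a.val s) :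
    vbar ≠ 0 ∧ L₁.mulVec vbar = (lam - L₂ s s + dotProduct l (M⁻¹.mulVec l)) • vbar :=
  stmt_5_general k₁ k₂ L₁ L₂ hL₂ s lam v hv hev M hM hMunit vbar hvbar l hl
end
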